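/- Let 0 < α < 1 and β > 0. Define h(x,α) = 0 for |x| < α and h(x,α) = 1 for α ≤ |x| ≤ 1, w(x) = log(1 - tanh²(x/√2)), η(β) = √2·arctanh(√(1-e^{-β})), Λ(β) = (1-α)^{-2} e^{-β} η(β)², and U(x;β) = β for |x| < α, U(x;β) = w(η(β)(|x|-α)/(1-α)) + β for α ≤ |x| ≤ 1. Then U(·;β) is a positive even function on [-1,1], of class C¹ with U(-1;β) = U(1;β) = 0, satisfies U'' + Λ(β) h(x,α) e^U = 0 on (-1,1)\{-α,α}, and ‖U(·;β)‖_∞ = β. -/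

import Mathlib

/-!
The profile `w t = -2 log cosh (t / √2)` solves the Liouville equation `w'' + exp w = 0`, has
`w 0 = w' 0 = 0` and decreases on `[0, ∞)`; `η(β)` is chosen so that `w (η β) = -β`. With
`c = η / (1 - α)`, `U x = β + V (x - α) + V (-x - α)` where `V s = w (c · max s 0)` (at most
one of the two terms is nonzero since `α ≥ 0`). As `w' 0 = 0`, `V` is `C¹`, and away from `±α`
the chain rule turns the Liouville equation into `U'' = -c² exp (U - β) = -Λ exp U`.
-/

noncomputable def w (x : ℝ) : ℝ := Real.log (1 - Real.tanh (x / Real.sqrt 2) ^ 2)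

noncomputable def artanh (x : ℝ) : ℝ := (1 / 2) * Real.log ((1 + x) / (1 - x))

noncomputable def eta (β : ℝ) : ℝ := Real.sqrt 2 * artanh (Real.sqrt (1 - Real.exp (-β)))

noncomputable def Lam (α β : ℝ) : ℝ := (1 - α) ^ (-2 : ℤ) * Real.exp (-β) * (eta β) ^ 2

noncomputable def step (α x : ℝ) : ℝ := if |x| < α then 0 else 1

noncomputable def U (α β x : ℝ) : ℝ :=
  if |x| < α then β else w (eta β * (|x| - α) / (1 - α)) + β

open Filter Topology Set

lemma one_sub_tanh_sq (x : ℝ) : 1 - Real.tanh x ^ 2 = (Real.cosh x ^ 2)⁻¹ := by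
  have := Real.cosh_pos x
  rw [Real.tanh_eq_sinh_div_cosh, div_pow, Real.cosh_sq]
  field_simp
  ring

lemma exp_w (t : ℝ) : Real.exp (w t) = (Real.cosh (t / √2) ^ 2)⁻¹ := by
  rw [w, one_sub_tanh_sq, Real.exp_log (by positivity)]

lemma w_eq_neg_two_mul_log_cosh (t : ℝ) : w t = -2 * Real.log (Real.cosh (t / √2)) := by
  rw [w, one_sub_tanh_sq, Real.log_inv, Real.log_pow]
  push_cast
  ring

lemma w_zero : w 0 = 0 := by simp [w]

lemma w_nonpos (t : ℝ) : w t ≤ 0 := by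
  rw [w_eq_neg_two_mul_log_cosh]
  linarith [Real.log_nonneg (Real.one_le_cosh (t / √2))]

lemma w_strictAntiOn : StrictAntiOn w (Ici 0) := by
  intro s hs t ht hst
  have hs' : (0 : ℝ) ≤ s / √2 := div_nonneg hs (by positivity)
  have ht' : (0 : ℝ) ≤ t / √2 := div_nonneg ht (by positivity)
  have hcosh := Real.cosh_strictMonoOn hs' ht' (div_lt_div_of_pos_right hst (by positivity))
  rw [w_eq_neg_two_mul_log_cosh, w_eq_neg_two_mul_log_cosh]
  linarith [Real.log_lt_log (Real.cosh_pos _) hcosh]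

lemma contDiff_w : ContDiff ℝ ⊤ w := by
  rw [funext w_eq_neg_two_mul_log_cosh]
  exact contDiff_const.mul <| (Real.contDiff_cosh.comp (contDiff_id.div_const _)).log
    fun t => (Real.cosh_pos _).ne'

lemma hasDerivAt_w (t : ℝ) : HasDerivAt w (-√2 * Real.tanh (t / √2)) t := by
  rw [funext w_eq_neg_two_mul_log_cosh]
  refine ((((Real.hasDerivAt_cosh _).comp t ((hasDerivAt_id t).div_const √2)).log
    (Real.cosh_pos _).ne').const_mul (-2)).congr_deriv ?_
  simp only [Function.comp_def, id, Real.tanh_eq_sinh_div_cosh]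
  field_simp
  simp

lemma hasDerivAt_deriv_w (t : ℝ) : HasDerivAt (deriv w) (-Real.exp (w t)) t := by
  rw [funext fun t => (hasDerivAt_w t).deriv, exp_w]
  have hc := (Real.cosh_pos (t / √2)).ne'
  simp only [Real.tanh_eq_sinh_div_cosh]
  have hu := (hasDerivAt_id t).div_const √2
  refine ((((Real.hasDerivAt_sinh _).comp t hu).div ((Real.hasDerivAt_cosh _).comp t hu)
    hc).const_mul (-√2)).congr_deriv ?_
  simp only [Function.comp_def, id]
  field_simp
  linear_combination -Real.cosh_sq_sub_sinh_sq (t / √2)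

lemma deriv_deriv_w_comp_affine (a b k y : ℝ) :
    deriv (deriv fun y => w (a * y + b) + k) y = -a ^ 2 * Real.exp (w (a * y + b)) := by
  have hl : ∀ y, HasDerivAt (fun y => a * y + b) a y := fun y => by
    simpa using ((hasDerivAt_id y).const_mul a).add_const b
  have h : ∀ y, HasDerivAt (fun y => w (a * y + b) + k) (deriv w (a * y + b) * a) y := fun y =>
    ((contDiff_w.differentiable (by simp)).differentiableAt.hasDerivAt.comp y (hl y)).add_const k
  rw [funext fun y => (h y).deriv]
  exact (((hasDerivAt_deriv_w _).comp y (hl y)).mul_const a).deriv.trans (by ring)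

lemma w_eta {β : ℝ} (hβ : 0 ≤ β) : w (eta β) = -β := by
  have hlt : 1 - Real.exp (-β) < 1 := by linarith [Real.exp_pos (-β)]
  have hnn : 0 ≤ 1 - Real.exp (-β) := by linarith [Real.exp_le_one_iff.2 (neg_nonpos.2 hβ)]
  have hs : √(1 - Real.exp (-β)) ∈ Ioo (-1) 1 :=
    ⟨by linarith [Real.sqrt_nonneg (1 - Real.exp (-β))],
      (Real.sqrt_lt' one_pos).2 (by simpa using hlt)⟩
  rw [w, eta, mul_div_cancel_left₀ _ (by positivity), artanh, ← Real.artanh_eq_half_log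
    (Ioo_subset_Icc_self hs), Real.tanh_artanh hs, Real.sq_sqrt hnn, sub_sub_cancel,
    Real.log_exp]

lemma eta_pos {β : ℝ} (hβ : 0 < β) : 0 < eta β := by
  have hs : √(1 - Real.exp (-β)) ∈ Ioo 0 1 :=
    ⟨Real.sqrt_pos.2 (by linarith [Real.exp_lt_one_iff.2 (neg_lt_zero.2 hβ)]),
      (Real.sqrt_lt' one_pos).2 (by linarith [Real.exp_pos (-β)])⟩
  rw [eta, artanh, ← Real.artanh_eq_half_log ⟨by linarith [hs.1], hs.2.le⟩]
  exact mul_pos (by positivity) (Real.artanh_pos hs)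

lemma Lam_eq (α β : ℝ) : Lam α β = (eta β / (1 - α)) ^ 2 * Real.exp (-β) := by
  rw [Lam, zpow_neg, div_pow, zpow_ofNat]
  ring

lemma contDiff_one_comp_max_zero {f : ℝ → ℝ} (hf : ContDiff ℝ 1 f) (h0 : deriv f 0 = 0) :
    ContDiff ℝ 1 fun s => f (max s 0) := by
  have hmax : Continuous fun s : ℝ => max s 0 := continuous_id.max continuous_const
  have hd : ∀ s, HasDerivAt (fun s => f (max s 0)) (deriv f (max s 0)) s := by
    refine hasDerivAt_of_hasDerivAt_of_ne' (x := 0) (fun y hy => ?_)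
      (hf.continuous.comp hmax).continuousAt
      ((hf.continuous_deriv le_rfl).comp hmax).continuousAt
    rcases hy.lt_or_gt with hy | hy
    · have hev : (fun s => f (max s 0)) =ᶠ[𝓝 y] fun _ => f 0 := by
        filter_upwards [Iio_mem_nhds hy] with s hs
        rw [max_eq_right hs.le]
      rw [max_eq_right hy.le, h0]
      exact (hasDerivAt_const y (f 0)).congr_of_eventuallyEq hev
    · have hev : (fun s => f (max s 0)) =ᶠ[𝓝 y] f := by
        filter_upwards [Ioi_mem_nhds hy] with s hs
        rw [max_eq_left hs.le]
      rw [max_eq_left hy.le]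
      exact ((hf.differentiable one_ne_zero).differentiableAt.hasDerivAt).congr_of_eventuallyEq hev
  refine contDiff_one_iff_deriv.2 ⟨fun s => (hd s).differentiableAt, ?_⟩
  rw [funext fun s => (hd s).deriv]
  exact (hf.continuous_deriv le_rfl).comp hmax

section profile

variable {α β : ℝ}

lemma U_eq_w_max (x : ℝ) : U α β x = w (eta β / (1 - α) * max (|x| - α) 0) + β := by
  rw [U]
  split_ifs with hx
  · rw [max_eq_right (by linarith), mul_zero, w_zero, zero_add]
  · rw [max_eq_left (by linarith), mul_div_right_comm]

lemma U_eq_add (hα : 0 ≤ α) (x : ℝ) :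
    U α β x =
      w (eta β / (1 - α) * max (x - α) 0) + w (eta β / (1 - α) * max (-x - α) 0) + β := by
  rw [U_eq_w_max]
  rcases le_total 0 x with hx | hx
  · rw [abs_of_nonneg hx, max_eq_right (a := -x - α) (by linarith), mul_zero, w_zero, add_zero]
  · rw [abs_of_nonpos hx, max_eq_right (a := x - α) (by linarith), mul_zero, w_zero, zero_add]

lemma contDiff_U (hα : 0 ≤ α) : ContDiff ℝ 1 (U α β) := by
  have hV : ContDiff ℝ 1 fun s => w (eta β / (1 - α) * max s 0) := by
    refine contDiff_one_comp_max_zero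
      ((contDiff_w.of_le le_top).comp (contDiff_const.mul contDiff_id)) ?_
    refine IsLocalMax.deriv_eq_zero (Eventually.of_forall fun t => ?_)
    simpa [w_zero] using w_nonpos _
  rw [funext (U_eq_add hα)]
  exact ((hV.comp (contDiff_id.sub contDiff_const)).add
    (hV.comp (contDiff_id.neg.sub contDiff_const))).add contDiff_const

lemma U_eventuallyEq_const {x : ℝ} (hx : |x| < α) : U α β =ᶠ[𝓝 x] fun _ => β := by
  filter_upwards [continuous_abs.continuousAt.eventually (gt_mem_nhds hx)] with y hy
  rw [U, if_pos hy]

lemma U_eventuallyEq_affine (hα : 0 ≤ α) {x : ℝ} (hx : α < |x|) :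
    ∃ a, a ^ 2 = (eta β / (1 - α)) ^ 2 ∧
      U α β =ᶠ[𝓝 x] fun y => w (a * y + -(eta β / (1 - α) * α)) + β := by
  have hfar := continuous_abs.continuousAt.eventually (lt_mem_nhds hx)
  rcases lt_or_gt_of_ne (show x ≠ 0 by rintro rfl; simp at hx; linarith) with hx0 | hx0
  · refine ⟨-(eta β / (1 - α)), neg_sq _, ?_⟩
    filter_upwards [hfar, Iio_mem_nhds hx0] with y hy hy0
    rw [U_eq_w_max, max_eq_left (by linarith), abs_of_neg hy0]
    ring_nf
  · refine ⟨eta β / (1 - α), rfl, ?_⟩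
    filter_upwards [hfar, Ioi_mem_nhds hx0] with y hy hy0
    rw [U_eq_w_max, max_eq_left (by linarith), abs_of_pos hy0]
    ring_nf

lemma U_ode (hα : 0 ≤ α) {x : ℝ} (hx : |x| ≠ α) :
    deriv (deriv (U α β)) x + Lam α β * step α x * Real.exp (U α β x) = 0 := by
  rcases hx.lt_or_gt with hx | hx
  · rw [(U_eventuallyEq_const hx).deriv.deriv_eq, deriv_const', deriv_const, step, if_pos hx]
    ring
  · obtain ⟨a, ha, hU⟩ := U_eventuallyEq_affine hα hx
    rw [hU.deriv.deriv_eq, deriv_deriv_w_comp_affine, step, if_neg hx.not_gt, hU.eq_of_nhds,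
      Lam_eq, ha, Real.exp_add, Real.exp_neg]
    field_simp
    ring

lemma U_le (x : ℝ) : U α β x ≤ β := by
  rw [U_eq_w_max]
  linarith [w_nonpos (eta β / (1 - α) * max (|x| - α) 0)]

lemma U_pos (hα : α < 1) (hβ : 0 < β) {x : ℝ} (hx : |x| < 1) : 0 < U α β x := by
  have hc : 0 < eta β / (1 - α) := div_pos (eta_pos hβ) (by linarith)
  have ht : eta β / (1 - α) * max (|x| - α) 0 < eta β := calc
    _ < eta β / (1 - α) * (1 - α) := by gcongr; exact max_lt (by linarith) (by linarith)
    _ = eta β := div_mul_cancel₀ _ (by linarith)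
  have := w_strictAntiOn (mul_nonneg hc.le (le_max_right _ _)) (eta_pos hβ).le ht
  rw [U_eq_w_max]
  linarith [w_eta hβ.le]

lemma U_nonneg (hα : α < 1) (hβ : 0 < β) {x : ℝ} (hx : |x| ≤ 1) : 0 ≤ U α β x := by
  have hc : 0 < eta β / (1 - α) := div_pos (eta_pos hβ) (by linarith)
  have ht : eta β / (1 - α) * max (|x| - α) 0 ≤ eta β := calc
    _ ≤ eta β / (1 - α) * (1 - α) := by gcongr; exact max_le (by linarith) (by linarith)
    _ = eta β := div_mul_cancel₀ _ (by linarith)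
  have := w_strictAntiOn.antitoneOn (mul_nonneg hc.le (le_max_right _ _)) (eta_pos hβ).le ht
  rw [U_eq_w_max]
  linarith [w_eta hβ.le]

lemma U_of_abs_eq_one (hα : α < 1) (hβ : 0 ≤ β) {x : ℝ} (hx : |x| = 1) : U α β x = 0 := by
  rw [U_eq_w_max, hx, max_eq_left (by linarith), div_mul_cancel₀ _ (by linarith), w_eta hβ,
    neg_add_cancel]

lemma U_zero (hα : 0 < α) : U α β 0 = β := by
  simp [U, hα]

end profile

theorem stmt_7 (α β : ℝ) (hα : 0 < α ∧ α < 1) (hβ : 0 < β) :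
    (∀ x ∈ Set.Ioo (-1 : ℝ) 1, 0 < U α β x) ∧
    (∀ x : ℝ, U α β (-x) = U α β x) ∧
    ContDiffOn ℝ 1 (U α β) (Set.Icc (-1) 1) ∧
    U α β (-1) = 0 ∧ U α β 1 = 0 ∧
    (∀ x ∈ Set.Ioo (-1 : ℝ) 1 \ {-α, α},
      deriv (deriv (U α β)) x + Lam α β * step α x * Real.exp (U α β x) = 0) ∧
    (∀ x ∈ Set.Icc (-1 : ℝ) 1, |U α β x| ≤ β) ∧
    (∃ x ∈ Set.Icc (-1 : ℝ) 1, |U α β x| = β) := by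
  obtain ⟨hα0, hα1⟩ := hα
  refine ⟨fun x hx => U_pos hα1 hβ (abs_lt.2 hx), fun x => by simp only [U, abs_neg],
    (contDiff_U hα0.le).contDiffOn, U_of_abs_eq_one hα1 hβ.le (by simp),
    U_of_abs_eq_one hα1 hβ.le (by simp), ?_, ?_,
    ⟨0, by simp, by rw [U_zero hα0, abs_of_pos hβ]⟩⟩
  · rintro x ⟨-, hx⟩
    refine U_ode hα0.le fun h => hx ?_
    rcases abs_eq hα0.le |>.1 h with rfl | rfl <;> simp
  · intro x hx
    exact abs_le.2 ⟨by linarith [U_nonneg hα1 hβ (abs_le.2 hx)], U_le x⟩
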